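/- arXiv:1107.3267 — 2 statements merged into one kernel-verified Lean document; each statement's English description precedes it below -/
import Mathlib

section
/- Let (X,μ) be a measure space, p ∈ (0,1], and let Φ : (0,∞) → (0,∞) be continuous, nondecreasing, of upper type 1 with constant C₁ and of strictly lower type p; set Φ(0) := 0. Let K ∈ [0,∞) and let g, h, m : X → [0,∞] be μ-measurable functions such that for all γ ∈ (0,1] and all λ ∈ (0,∞): μ({g > 2λ} ∩ {m ≤ γλ}) ≤ K γ² μ({h > λ}). Then there exists C, depending only on C₁, p and K, such that for every γ ∈ (0,1]: ∫_X Φ(g) dμ ≤ C ( γ^{-1} ∫_X Φ(m) dμ + γ² ∫_X Φ(h) dμ ), with all integrals understood in [0,∞]. -/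
/-!
Put `ψ(s) = ∫₀ˢ Φ(t) dt/t`. Upper type 1 gives `Φ(s)/s ≤ C₁ Φ(t)/t` for `t ≤ s`, hence `Φ ≤ C₁ ψ`;
strictly lower type `p` gives `Φ(t)/t ≤ Φ(s) s⁻ᵖ tᵖ⁻¹`, hence `ψ ≤ Φ/p`. By the layer-cake formula
`∫ ψ(u) dμ = ∫₀^∞ μ{u > t} Φ(t) dt/t`, and this identity holds in `[0,∞]` for every measurable `u`:
if `u = ∞` on a set of positive measure both sides are infinite, because `∫^∞ Φ(t) dt/t` diverges.

For the distribution integral of `g`, split `{g > t}` along `{m ≤ γt/2}` and apply the hypothesis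
with `λ = t/2`: this bounds it by `Kγ²` times the distribution integral of `h` at scale `t/2` plus
that of `m` at scale `γt/2`. Rescaling `t ↦ ct` with `c ≤ 1` costs a factor `C₁/c` by upper type 1;
for `c = γ/2` this is the factor `γ⁻¹` in front of the `m` term.
-/

open MeasureTheory ENNReal

/-- Canonical extension of `Φ : [0,∞) → [0,∞)` to `[0,∞]`, sending `∞` to `∞`. -/
noncomputable def extPhi (Φ : ℝ → ℝ) : ℝ≥0∞ → ℝ≥0∞ :=
  fun s => if s = ⊤ then ⊤ else ENNReal.ofReal (Φ s.toReal)

open Set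

def IsUpperTypeOne (C₁ : ℝ) (Φ : ℝ → ℝ) : Prop :=
  ∀ s ∈ Ioi (0:ℝ), ∀ t : ℝ, 1 ≤ t → Φ (s * t) ≤ C₁ * t * Φ s

def IsStrictlyLowerType (p : ℝ) (Φ : ℝ → ℝ) : Prop :=
  ∀ s ∈ Ioi (0:ℝ), ∀ t ∈ Ioo (0:ℝ) 1, Φ (s * t) ≤ t ^ p * Φ s

variable {p C₁ : ℝ} {Φ : ℝ → ℝ}

theorem IsUpperTypeOne.div_le_mul_div (hup : IsUpperTypeOne C₁ Φ) {s t : ℝ} (ht : 0 < t)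
    (hts : t ≤ s) : Φ s / s ≤ C₁ * (Φ t / t) := by
  have h := hup t ht (s / t) ((one_le_div ht).2 hts)
  rw [mul_div_cancel₀ _ ht.ne'] at h
  rw [div_le_iff₀ (ht.trans_le hts)]
  calc Φ s ≤ C₁ * (s / t) * Φ t := h
    _ = C₁ * (Φ t / t) * s := by field_simp

theorem IsStrictlyLowerType.le_rpow_mul (hlow : IsStrictlyLowerType p Φ) {s t : ℝ} (ht : 0 < t)
    (hts : t ≤ s) : Φ t ≤ (t / s) ^ p * Φ s := by
  have hs := ht.trans_le hts
  rcases hts.eq_or_lt with rfl | hlt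
  · rw [div_self ht.ne', Real.one_rpow, one_mul]
  · have h := hlow s hs (t / s) ⟨div_pos ht hs, (div_lt_one hs).2 hlt⟩
    rwa [mul_div_cancel₀ _ hs.ne'] at h

theorem IsStrictlyLowerType.div_le_mul_rpow (hlow : IsStrictlyLowerType p Φ) {s t : ℝ}
    (ht : 0 < t) (hts : t ≤ s) : Φ t / t ≤ Φ s / s ^ p * t ^ (p - 1) := by
  have hs := ht.trans_le hts
  calc Φ t / t ≤ (t / s) ^ p * Φ s / t := by gcongr; exact hlow.le_rpow_mul ht hts
    _ = Φ s / s ^ p * t ^ (p - 1) := by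
      rw [Real.div_rpow ht.le hs.le, Real.rpow_sub_one ht.ne']
      ring

variable {X : Type*} [MeasurableSpace X] {μ : Measure X}

theorem lintegral_extPhi_le_ofReal_mul {F G : ℝ → ℝ} {c : ℝ} (hc : 0 < c)
    (hFG : ∀ s, 0 ≤ s → F s ≤ c * G s) (u : X → ℝ≥0∞) :
    ∫⁻ x, extPhi F (u x) ∂μ ≤ ENNReal.ofReal c * ∫⁻ x, extPhi G (u x) ∂μ := by
  rw [← lintegral_const_mul' _ _ ofReal_ne_top]
  refine lintegral_mono fun x => ?_
  unfold extPhi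
  split_ifs
  · rw [mul_top (ofReal_pos.2 hc).ne']
  · rw [← ofReal_mul hc.le]
    exact ofReal_le_ofReal (hFG _ toReal_nonneg)

theorem lintegral_extPhi_eq_top (F : ℝ → ℝ) {u : X → ℝ≥0∞} (hu : Measurable u)
    (htop : μ {x | u x = ⊤} ≠ 0) : ∫⁻ x, extPhi F (u x) ∂μ = ⊤ := by
  refine top_le_iff.1 ?_
  calc ⊤ = ∫⁻ _ in {x | u x = ⊤}, ⊤ ∂μ := by rw [setLIntegral_const, top_mul htop]
    _ = ∫⁻ x in {x | u x = ⊤}, extPhi F (u x) ∂μ :=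
        setLIntegral_congr_fun (hu (measurableSet_singleton ⊤)) fun x hx => by
          simp [extPhi, show u x = ⊤ from hx]
    _ ≤ ∫⁻ x, extPhi F (u x) ∂μ := setLIntegral_le_lintegral _ _

theorem lintegral_Ioi_ofReal_inv_eq_top : ∫⁻ t in Ioi (1:ℝ), ENNReal.ofReal t⁻¹ = ⊤ := by
  by_contra h
  refine not_integrableOn_Ioi_inv ⟨measurable_inv.aestronglyMeasurable,
    (hasFiniteIntegral_iff_ofReal ?_).2 (lt_top_iff_ne_top.2 h)⟩
  filter_upwards [ae_restrict_mem measurableSet_Ioi] with t ht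
  exact inv_nonneg.2 (zero_le_one.trans ht.le)

theorem setLIntegral_Ioi_comp_mul_left (F : ℝ → ℝ≥0∞) {c : ℝ} (hc : 0 < c) :
    ∫⁻ t in Ioi 0, F (c * t) = ENNReal.ofReal c⁻¹ * ∫⁻ t in Ioi 0, F t := by
  have he : MeasurableEmbedding (c * ·) := (Homeomorph.mulLeft₀ c hc.ne').measurableEmbedding
  have hpre : (c * ·) ⁻¹' Ioi (0:ℝ) = Ioi 0 := by
    ext t; simp [mul_pos_iff_of_pos_left hc]
  rw [← abs_of_pos (inv_pos.2 hc), ← smul_eq_mul, ← lintegral_smul_measure,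
    ← Measure.restrict_smul, ← Real.map_volume_mul_left hc.ne', he.restrict_map,
    he.lintegral_map, hpre]

namespace GoodLambda

noncomputable def psi (Φ : ℝ → ℝ) (s : ℝ) : ℝ := ∫ t in (0:ℝ)..s, Φ t / t

theorem psi_zero : psi Φ 0 = 0 := intervalIntegral.integral_same

section Psi

variable (hp : 0 < p) (hcont : ContinuousOn Φ (Ioi 0)) (hpos : ∀ t ∈ Ioi (0:ℝ), 0 < Φ t)
  (hlow : IsStrictlyLowerType p Φ)
include hp hcont hpos hlow

theorem intervalIntegrable_div_self {s : ℝ} (hs : 0 < s) :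
    IntervalIntegrable (fun t => Φ t / t) volume 0 s := by
  have hdom : IntervalIntegrable (fun t => Φ s / s ^ p * t ^ (p - 1)) volume 0 s :=
    (intervalIntegral.intervalIntegrable_rpow' (r := p - 1) (by linarith)).const_mul _
  rw [intervalIntegrable_iff_integrableOn_Ioc_of_le hs.le] at hdom ⊢
  have hmeas : ContinuousOn (fun t => Φ t / t) (Ioc 0 s) :=
    (hcont.mono fun _ ht => ht.1).div continuousOn_id fun _ ht => ht.1.ne'
  refine hdom.mono' (hmeas.aestronglyMeasurable measurableSet_Ioc)
    ((ae_restrict_iff' measurableSet_Ioc).2 ?_)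
  filter_upwards with t ht
  rw [Real.norm_of_nonneg (div_nonneg (hpos t ht.1).le ht.1.le)]
  exact hlow.div_le_mul_rpow ht.1 ht.2

theorem psi_le_div {s : ℝ} (hs : 0 < s) : psi Φ s ≤ Φ s / p := by
  calc psi Φ s ≤ ∫ t in (0:ℝ)..s, Φ s / s ^ p * t ^ (p - 1) := by
        refine intervalIntegral.integral_mono_on_of_le_Ioo hs.le
          (intervalIntegrable_div_self hp hcont hpos hlow hs)
          ((intervalIntegral.intervalIntegrable_rpow' (r := p - 1) (by linarith)).const_mul _)
          fun t ht => hlow.div_le_mul_rpow ht.1 ht.2.le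
    _ = Φ s / p := by
        rw [intervalIntegral.integral_const_mul, integral_rpow (Or.inl (by linarith)),
          sub_add_cancel, Real.zero_rpow hp.ne', sub_zero]
        field_simp

theorem le_mul_psi (hup : IsUpperTypeOne C₁ Φ) {s : ℝ} (hs : 0 < s) : Φ s ≤ C₁ * psi Φ s := by
  calc Φ s = ∫ _ in (0:ℝ)..s, Φ s / s := by simp [hs.ne']
    _ ≤ ∫ t in (0:ℝ)..s, C₁ * (Φ t / t) :=
        intervalIntegral.integral_mono_on_of_le_Ioo hs.le intervalIntegrable_const
          ((intervalIntegrable_div_self hp hcont hpos hlow hs).const_mul _)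
          fun t ht => hup.div_le_mul_div ht.1 ht.2.le
    _ = C₁ * psi Φ s := intervalIntegral.integral_const_mul _ _

end Psi

noncomputable def distIntegral (μ : Measure X) (Φ : ℝ → ℝ) (u : X → ℝ≥0∞) : ℝ≥0∞ :=
  ∫⁻ t in Ioi 0, μ {x | ENNReal.ofReal t < u x} * ENNReal.ofReal (Φ t / t)

theorem aemeasurable_meas_lt_mul (hcont : ContinuousOn Φ (Ioi 0)) (u : X → ℝ≥0∞) {c : ℝ}
    (hc : 0 ≤ c) : AEMeasurable (fun t => μ {x | ENNReal.ofReal (c * t) < u x} *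
      ENNReal.ofReal (Φ t / t)) (volume.restrict (Ioi 0)) := by
  have hanti : Antitone fun t : ℝ => μ {x | ENNReal.ofReal (c * t) < u x} := fun a b hab =>
    measure_mono fun x hx => lt_of_le_of_lt (ofReal_le_ofReal (by gcongr)) hx
  exact hanti.measurable.aemeasurable.mul <| ENNReal.measurable_ofReal.comp_aemeasurable <|
    (hcont.div continuousOn_id fun _ ht => ht.ne').aemeasurable measurableSet_Ioi

theorem lintegral_Ioi_ofReal_div_self_eq_top (hmono : MonotoneOn Φ (Ioi 0))
    (hpos : ∀ t ∈ Ioi (0:ℝ), 0 < Φ t) : ∫⁻ t in Ioi 0, ENNReal.ofReal (Φ t / t) = ⊤ := by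
  have hΦ1 : 0 < Φ 1 := hpos 1 (mem_Ioi.2 one_pos)
  refine top_le_iff.1 ?_
  calc ⊤ = ENNReal.ofReal (Φ 1) * ∫⁻ t in Ioi (1:ℝ), ENNReal.ofReal t⁻¹ := by
        rw [lintegral_Ioi_ofReal_inv_eq_top, mul_top (ofReal_pos.2 hΦ1).ne']
    _ = ∫⁻ t in Ioi (1:ℝ), ENNReal.ofReal (Φ 1 * t⁻¹) := by
        rw [← lintegral_const_mul' _ _ ofReal_ne_top]
        exact setLIntegral_congr_fun measurableSet_Ioi fun t _ => (ofReal_mul hΦ1.le).symm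
    _ ≤ ∫⁻ t in Ioi (1:ℝ), ENNReal.ofReal (Φ t / t) :=
        setLIntegral_mono' measurableSet_Ioi fun t ht => ofReal_le_ofReal <| by
          rw [div_eq_mul_inv]
          gcongr
          · exact inv_nonneg.2 (zero_le_one.trans ht.le)
          · exact hmono (mem_Ioi.2 one_pos) (mem_Ioi.2 (one_pos.trans ht)) ht.le
    _ ≤ ∫⁻ t in Ioi 0, ENNReal.ofReal (Φ t / t) := lintegral_mono_set (Ioi_subset_Ioi zero_le_one)

theorem lintegral_extPhi_psi (hp : 0 < p) (hcont : ContinuousOn Φ (Ioi 0))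
    (hmono : MonotoneOn Φ (Ioi 0)) (hpos : ∀ t ∈ Ioi (0:ℝ), 0 < Φ t)
    (hlow : IsStrictlyLowerType p Φ) {u : X → ℝ≥0∞} (hu : Measurable u) :
    ∫⁻ x, extPhi (psi Φ) (u x) ∂μ = distIntegral μ Φ u := by
  by_cases htop : μ {x | u x = ⊤} = 0
  · have hfin : ∀ᵐ x ∂μ, u x ≠ ⊤ := measure_eq_zero_iff_ae_notMem.1 htop
    calc ∫⁻ x, extPhi (psi Φ) (u x) ∂μ = ∫⁻ x, ENNReal.ofReal (psi Φ (u x).toReal) ∂μ :=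
          lintegral_congr_ae (hfin.mono fun x hx => if_neg hx)
      _ = ∫⁻ t in Ioi 0, μ {x | t < (u x).toReal} * ENNReal.ofReal (Φ t / t) :=
          lintegral_comp_eq_lintegral_meas_lt_mul μ (ae_of_all _ fun _ => toReal_nonneg)
            hu.ennreal_toReal.aemeasurable
            (fun _ ht => intervalIntegrable_div_self hp hcont hpos hlow ht)
            ((ae_restrict_iff' measurableSet_Ioi).2 <| ae_of_all _ fun t ht =>
              div_nonneg (hpos t ht).le (le_of_lt ht))
      _ = distIntegral μ Φ u := setLIntegral_congr_fun measurableSet_Ioi fun t ht => by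
          congr 1
          exact measure_congr <| hfin.mono fun x hx =>
            propext (ofReal_lt_iff_lt_toReal (le_of_lt ht) hx).symm
  · rw [lintegral_extPhi_eq_top _ hu htop, eq_comm, ← top_le_iff]
    calc ⊤ = μ {x | u x = ⊤} * ∫⁻ t in Ioi 0, ENNReal.ofReal (Φ t / t) := by
          rw [lintegral_Ioi_ofReal_div_self_eq_top hmono hpos, mul_top htop]
      _ ≤ ∫⁻ t in Ioi 0, μ {x | u x = ⊤} * ENNReal.ofReal (Φ t / t) :=
          lintegral_const_mul_le _ _
      _ ≤ distIntegral μ Φ u := lintegral_mono fun t =>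
          mul_le_mul_left (measure_mono fun x (hx : u x = ⊤) => by simp [hx]) _

theorem lintegral_meas_lt_mul_le_distIntegral (hC₁ : 0 ≤ C₁) (hup : IsUpperTypeOne C₁ Φ)
    (u : X → ℝ≥0∞) {c : ℝ} (hc : 0 < c) (hc1 : c ≤ 1) :
    ∫⁻ t in Ioi 0, μ {x | ENNReal.ofReal (c * t) < u x} * ENNReal.ofReal (Φ t / t)
      ≤ ENNReal.ofReal (C₁ / c) * distIntegral μ Φ u := by
  calc _ ≤ ∫⁻ t in Ioi 0, ENNReal.ofReal C₁ *
          (μ {x | ENNReal.ofReal (c * t) < u x} * ENNReal.ofReal (Φ (c * t) / (c * t))) := by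
        refine setLIntegral_mono' measurableSet_Ioi fun t ht => ?_
        rw [mul_left_comm, ← ofReal_mul hC₁]
        gcongr
        exact hup.div_le_mul_div (mul_pos hc ht) (mul_le_of_le_one_left (le_of_lt ht) hc1)
    _ = ENNReal.ofReal C₁ * (ENNReal.ofReal c⁻¹ * distIntegral μ Φ u) := by
        rw [lintegral_const_mul' _ _ ofReal_ne_top, setLIntegral_Ioi_comp_mul_left
          (fun s => μ {x | ENNReal.ofReal s < u x} * ENNReal.ofReal (Φ s / s)) hc]
        rfl
    _ = ENNReal.ofReal (C₁ / c) * distIntegral μ Φ u := by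
        rw [← mul_assoc, ← ofReal_mul hC₁, div_eq_mul_inv]

theorem distIntegral_le_goodLambda (hcont : ContinuousOn Φ (Ioi 0)) {g h m : X → ℝ≥0∞}
    {a : ℝ≥0∞} {γ : ℝ}
    (hgl : ∀ l : ℝ, 0 < l → μ ({x | ENNReal.ofReal (2 * l) < g x} ∩
      {x | m x ≤ ENNReal.ofReal (γ * l)}) ≤ a * μ {x | ENNReal.ofReal l < h x}) :
    distIntegral μ Φ g ≤
      a * (∫⁻ t in Ioi 0, μ {x | ENNReal.ofReal (2⁻¹ * t) < h x} * ENNReal.ofReal (Φ t / t)) +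
        ∫⁻ t in Ioi 0, μ {x | ENNReal.ofReal (γ / 2 * t) < m x} * ENNReal.ofReal (Φ t / t) := by
  have hmeas := aemeasurable_meas_lt_mul (μ := μ) hcont h (c := 2⁻¹) (by norm_num)
  calc distIntegral μ Φ g ≤ ∫⁻ t in Ioi 0,
        a * (μ {x | ENNReal.ofReal (2⁻¹ * t) < h x} * ENNReal.ofReal (Φ t / t)) +
          μ {x | ENNReal.ofReal (γ / 2 * t) < m x} * ENNReal.ofReal (Φ t / t) := by
        refine setLIntegral_mono' measurableSet_Ioi fun t ht => ?_
        rw [← mul_assoc, ← add_mul]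
        gcongr
        have hl := hgl (2⁻¹ * t) (mul_pos (by norm_num) ht)
        rw [show 2 * (2⁻¹ * t) = t by ring, show γ * (2⁻¹ * t) = γ / 2 * t by ring] at hl
        refine (measure_le_inter_add_sdiff μ _ {x | m x ≤ ENNReal.ofReal (γ / 2 * t)}).trans
          (add_le_add hl (measure_mono fun x hx => ?_))
        simpa using hx.2
    _ = _ := by rw [lintegral_add_left' (hmeas.const_mul a), lintegral_const_mul'' a hmeas]

section Bounds

variable (hp : 0 < p) (hcont : ContinuousOn Φ (Ioi 0))
  (hmono : MonotoneOn Φ (Ioi 0)) (hpos : ∀ t ∈ Ioi (0:ℝ), 0 < Φ t) (hΦ0 : Φ 0 = 0)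
  (hlow : IsStrictlyLowerType p Φ)
include hp hcont hmono hpos hΦ0 hlow

theorem lintegral_extPhi_le_distIntegral (hC₁ : 0 < C₁) (hup : IsUpperTypeOne C₁ Φ)
    {u : X → ℝ≥0∞} (hu : Measurable u) :
    ∫⁻ x, extPhi Φ (u x) ∂μ ≤ ENNReal.ofReal C₁ * distIntegral μ Φ u := by
  rw [← lintegral_extPhi_psi hp hcont hmono hpos hlow hu]
  refine lintegral_extPhi_le_ofReal_mul hC₁ (fun s hs => ?_) u
  rcases hs.eq_or_lt with rfl | hs
  · rw [hΦ0, psi_zero, mul_zero]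
  · exact le_mul_psi hp hcont hpos hlow hup hs

theorem distIntegral_le {u : X → ℝ≥0∞} (hu : Measurable u) :
    distIntegral μ Φ u ≤ ENNReal.ofReal p⁻¹ * ∫⁻ x, extPhi Φ (u x) ∂μ := by
  rw [← lintegral_extPhi_psi hp hcont hmono hpos hlow hu]
  refine lintegral_extPhi_le_ofReal_mul (inv_pos.2 hp) (fun s hs => ?_) u
  rcases hs.eq_or_lt with rfl | hs
  · rw [hΦ0, psi_zero, mul_zero]
  · rw [← div_eq_inv_mul]
    exact psi_le_div hp hcont hpos hlow hs

theorem lintegral_extPhi_le_of_goodLambda (hC₁ : 0 < C₁) (hup : IsUpperTypeOne C₁ Φ)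
    {g h m : X → ℝ≥0∞} (hg : Measurable g) (hh : Measurable h) (hm : Measurable m)
    {a : ℝ≥0∞} {γ : ℝ} (hγ : 0 < γ) (hγ1 : γ ≤ 1)
    (hgl : ∀ l : ℝ, 0 < l → μ ({x | ENNReal.ofReal (2 * l) < g x} ∩
      {x | m x ≤ ENNReal.ofReal (γ * l)}) ≤ a * μ {x | ENNReal.ofReal l < h x}) :
    ∫⁻ x, extPhi Φ (g x) ∂μ ≤ ENNReal.ofReal (2 * C₁ ^ 2 / p) *
      (a * ∫⁻ x, extPhi Φ (h x) ∂μ + ENNReal.ofReal γ⁻¹ * ∫⁻ x, extPhi Φ (m x) ∂μ) := by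
  have e₁ : ENNReal.ofReal (C₁ / 2⁻¹) = 2 * ENNReal.ofReal C₁ := by
    rw [div_inv_eq_mul, ofReal_mul hC₁.le, ofReal_ofNat, mul_comm]
  have e₂ : ENNReal.ofReal (C₁ / (γ / 2)) = 2 * ENNReal.ofReal C₁ * ENNReal.ofReal γ⁻¹ := by
    rw [show C₁ / (γ / 2) = 2 * C₁ * γ⁻¹ by field_simp, ofReal_mul (by positivity),
      ofReal_mul zero_le_two, ofReal_ofNat]
  have e₃ : ENNReal.ofReal (2 * C₁ ^ 2 / p) =
      2 * ENNReal.ofReal C₁ * ENNReal.ofReal C₁ * ENNReal.ofReal p⁻¹ := by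
    rw [div_eq_mul_inv, sq, ← mul_assoc, ofReal_mul (by positivity), ofReal_mul (by positivity),
      ofReal_mul zero_le_two, ofReal_ofNat]
  calc ∫⁻ x, extPhi Φ (g x) ∂μ ≤ ENNReal.ofReal C₁ * distIntegral μ Φ g :=
        lintegral_extPhi_le_distIntegral hp hcont hmono hpos hΦ0 hlow hC₁ hup hg
    _ ≤ ENNReal.ofReal C₁ * (a * (ENNReal.ofReal (C₁ / 2⁻¹) * distIntegral μ Φ h) +
          ENNReal.ofReal (C₁ / (γ / 2)) * distIntegral μ Φ m) := by
        refine mul_le_mul_right ((distIntegral_le_goodLambda hcont hgl).trans ?_) _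
        exact add_le_add
          (mul_le_mul_right (lintegral_meas_lt_mul_le_distIntegral hC₁.le hup h
            (by norm_num) (by norm_num)) a)
          (lintegral_meas_lt_mul_le_distIntegral hC₁.le hup m (by positivity) (by linarith))
    _ ≤ ENNReal.ofReal C₁ * (a * (ENNReal.ofReal (C₁ / 2⁻¹) *
            (ENNReal.ofReal p⁻¹ * ∫⁻ x, extPhi Φ (h x) ∂μ)) +
          ENNReal.ofReal (C₁ / (γ / 2)) * (ENNReal.ofReal p⁻¹ * ∫⁻ x, extPhi Φ (m x) ∂μ)) := by
        gcongr <;> exact distIntegral_le hp hcont hmono hpos hΦ0 hlow ‹_›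
    _ = _ := by rw [e₁, e₂, e₃]; ring

end Bounds

end GoodLambda

/-- the "good-λ" integral inequality. If
`μ({g > 2λ} ∩ {m ≤ γλ}) ≤ K γ² μ({h > λ})` for all `γ ∈ (0,1]` and `λ > 0`, then
`∫ Φ(g) dμ ≤ C (γ⁻¹ ∫ Φ(m) dμ + γ² ∫ Φ(h) dμ)` with `C` depending only on `C₁`, `p`, `K`. -/
theorem stmt9 (p C₁ K : ℝ) (hp : p ∈ Set.Ioc (0:ℝ) 1) (hC₁ : 1 ≤ C₁) (hK : 0 ≤ K) :
    ∃ C : ℝ, 0 < C ∧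
    ∀ (X : Type) [MeasurableSpace X], ∀ (μ : Measure X),
    ∀ Φ : ℝ → ℝ, ContinuousOn Φ (Set.Ioi 0) → MonotoneOn Φ (Set.Ioi 0) →
      (∀ t ∈ Set.Ioi (0:ℝ), 0 < Φ t) → Φ 0 = 0 →
      (∀ s ∈ Set.Ioi (0:ℝ), ∀ t : ℝ, 1 ≤ t → Φ (s * t) ≤ C₁ * t * Φ s) →
      (∀ s ∈ Set.Ioi (0:ℝ), ∀ t ∈ Set.Ioo (0:ℝ) 1, Φ (s * t) ≤ t ^ p * Φ s) →
    ∀ g h m : X → ℝ≥0∞, Measurable g → Measurable h → Measurable m →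
      (∀ γ ∈ Set.Ioc (0:ℝ) 1, ∀ l : ℝ, 0 < l →
        μ ({x | ENNReal.ofReal (2 * l) < g x} ∩ {x | m x ≤ ENNReal.ofReal (γ * l)}) ≤
          ENNReal.ofReal (K * γ ^ 2) * μ {x | ENNReal.ofReal l < h x}) →
      ∀ γ ∈ Set.Ioc (0:ℝ) 1,
        (∫⁻ x, extPhi Φ (g x) ∂μ) ≤
          ENNReal.ofReal C * (ENNReal.ofReal γ⁻¹ * ∫⁻ x, extPhi Φ (m x) ∂μ +
            ENNReal.ofReal (γ ^ 2) * ∫⁻ x, extPhi Φ (h x) ∂μ) := by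
  have hp0 : 0 < p := hp.1
  refine ⟨2 * C₁ ^ 2 / p * (K + 1), by positivity, ?_⟩
  intro X _ μ Φ hcont hmono hpos hΦ0 hup hlow g h m hg hh hm hgl γ hγ
  calc ∫⁻ x, extPhi Φ (g x) ∂μ ≤ ENNReal.ofReal (2 * C₁ ^ 2 / p) *
        (ENNReal.ofReal (K * γ ^ 2) * ∫⁻ x, extPhi Φ (h x) ∂μ +
          ENNReal.ofReal γ⁻¹ * ∫⁻ x, extPhi Φ (m x) ∂μ) :=
      GoodLambda.lintegral_extPhi_le_of_goodLambda hp0 hcont hmono hpos hΦ0 hlow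
        (zero_lt_one.trans_le hC₁) hup hg hh hm hγ.1 hγ.2 (hgl γ hγ)
    _ ≤ _ := by
      rw [ofReal_mul (p := 2 * C₁ ^ 2 / p) (by positivity), mul_assoc]
      refine mul_le_mul_right ?_ _
      rw [add_comm, mul_add, ← mul_assoc, ← mul_assoc, ← ofReal_mul (by positivity),
        ← ofReal_mul (by positivity)]
      gcongr
      · exact le_mul_of_one_le_left (inv_nonneg.2 hγ.1.le) (by linarith)
      · linarith
end

section
/- Let n ≥ 1, p ∈ (0,1], and let Φ : (0,∞) → (0,∞) be continuous, strictly increasing, of upper type 1 with constant C₁ and of strictly lower type p (so that Φ is a bijection of (0,∞) onto (0,∞)); set ρ(t) := t^{-1}/Φ^{-1}(t^{-1}) and Φ(0) := 0. Then there exists C, depending only on n, p and C₁, such that for every cube Q = Q(x_Q, l) ⊂ ℝⁿ and every measurable a : ℝⁿ×(0,∞) → ℂ supported in the tent Q̂ with ∫∫_{Q̂} |a(y,t)|² dy dt/t ≤ |Q|^{-1} [ρ(|Q|)]^{-2}, one has ∫_{ℝⁿ} Φ(A(a)(x)) dx ≤ C. -/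
open MeasureTheory ENNReal

/-- The conical square functional (aperture 1):
`A(F)(x) = (∫∫_{‖y−x‖_∞ < t, t>0} |F(y,t)|² dy dt / t^{n+1})^{1/2}`,
where `ℝⁿ = Fin n → ℝ` carries the sup-norm. -/
noncomputable def conicalSq (n : ℕ) (F : (Fin n → ℝ) → ℝ → ℂ) (x : Fin n → ℝ) : ℝ≥0∞ :=
  (∫⁻ q in {q : (Fin n → ℝ) × ℝ | 0 < q.2 ∧ dist q.1 x < q.2},
      (‖F q.1 q.2‖₊ : ℝ≥0∞) ^ 2 / ENNReal.ofReal (q.2 ^ (n + 1))) ^ (1/2 : ℝ)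

/-- The tent over the cube `Q(x_Q, l)`:
`Q̂ = {(y,t) : t > 0, ‖y − x_Q‖_∞ < l/2 − t}`. -/
def tent (n : ℕ) (xQ : Fin n → ℝ) (l : ℝ) : Set ((Fin n → ℝ) × ℝ) :=
  {q | 0 < q.2 ∧ dist q.1 xQ < l / 2 - q.2}

/-- `ρ(t) := t⁻¹ / Φ⁻¹(t⁻¹)`, expressed via the inverse function `Ψ` of `Φ`. -/
noncomputable def rhoOf (Ψ : ℝ → ℝ) (t : ℝ) : ℝ := t⁻¹ / Ψ t⁻¹

/-! Since `a` lives in the tent over `Q`, the square function `A(a)` vanishes off `Q`, and by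
Tonelli `‖A(a)‖₂² = 2ⁿ ∫∫ |a|² dy dt/t`, which the size condition bounds by `2ⁿ |Q| u²` with
`u = Φ⁻¹(|Q|⁻¹)`. Upper type 1 and monotonicity give `Φ(s) ≤ C₁ Φ(u) (1 + s/u)` for all `s ≥ 0`;
integrating this over `Q` and using Cauchy–Schwarz yields `∫ Φ(A(a)) ≤ C₁ (1 + 2^{n/2})`. -/

open Set Metric

section Cone

variable {X : Type*} [PseudoMetricSpace X]

def cone (x : X) : Set (X × ℝ) := {q | 0 < q.2 ∧ dist q.1 x < q.2}

lemma setOf_mem_cone (q : X × ℝ) : {x | q ∈ cone x} = ball q.1 q.2 := by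
  ext x
  simp only [cone, mem_ofPred_eq, mem_ball, dist_comm x]
  exact ⟨And.right, fun h => ⟨dist_nonneg.trans_lt h, h⟩⟩

variable [MeasurableSpace X] [OpensMeasurableSpace X] [SecondCountableTopology X]

lemma measurableSet_cone_graph : MeasurableSet {p : X × (X × ℝ) | p.2 ∈ cone p.1} :=
  (measurableSet_lt measurable_const measurable_snd.snd).inter
    (measurableSet_lt (measurable_snd.fst.dist measurable_fst) measurable_snd.snd)

lemma measurableSet_cone (x : X) : MeasurableSet (cone x) :=
  measurable_prodMk_left measurableSet_cone_graph

lemma setLIntegral_cone_eq_lintegral_indicator (ν : Measure (X × ℝ)) (f : X × ℝ → ℝ≥0∞)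
    (x : X) :
    ∫⁻ q in cone x, f q ∂ν =
      ∫⁻ q, {p : X × (X × ℝ) | p.2 ∈ cone p.1}.indicator (fun p => f p.2) (x, q) ∂ν := by
  rw [← lintegral_indicator (measurableSet_cone x)]
  rfl

lemma measurable_setLIntegral_cone (ν : Measure (X × ℝ)) [SFinite ν] {f : X × ℝ → ℝ≥0∞}
    (hf : Measurable f) : Measurable fun x => ∫⁻ q in cone x, f q ∂ν := by
  simp only [setLIntegral_cone_eq_lintegral_indicator]
  exact ((hf.comp measurable_snd).indicator measurableSet_cone_graph).lintegral_prod_right'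

lemma lintegral_setLIntegral_cone (μ : Measure X) [SFinite μ] (ν : Measure (X × ℝ)) [SFinite ν]
    {f : X × ℝ → ℝ≥0∞} (hf : Measurable f) :
    ∫⁻ x, ∫⁻ q in cone x, f q ∂ν ∂μ = ∫⁻ q, f q * μ (ball q.1 q.2) ∂ν := by
  simp only [setLIntegral_cone_eq_lintegral_indicator]
  refine (lintegral_lintegral_swap ?_).trans (lintegral_congr fun q => ?_)
  · exact ((hf.comp measurable_snd).indicator measurableSet_cone_graph).aemeasurable
  rw [← lintegral_indicator_const measurableSet_ball, ← setOf_mem_cone]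
  rfl

end Cone

section SquareFunction

variable {n : ℕ}

lemma conicalSq_eq (F : (Fin n → ℝ) → ℝ → ℂ) (x : Fin n → ℝ) :
    conicalSq n F x =
      (∫⁻ q in cone x, (‖F q.1 q.2‖₊ : ℝ≥0∞) ^ 2 / ENNReal.ofReal (q.2 ^ (n + 1))) ^ (1 / 2 : ℝ) :=
  rfl

lemma conicalSq_sq (F : (Fin n → ℝ) → ℝ → ℂ) (x : Fin n → ℝ) :
    conicalSq n F x ^ 2 =
      ∫⁻ q in cone x, (‖F q.1 q.2‖₊ : ℝ≥0∞) ^ 2 / ENNReal.ofReal (q.2 ^ (n + 1)) := by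
  rw [conicalSq_eq, ← ENNReal.rpow_natCast, ← ENNReal.rpow_mul]
  norm_num

lemma measurable_conicalSq_integrand {F : (Fin n → ℝ) → ℝ → ℂ}
    (hF : Measurable fun q : (Fin n → ℝ) × ℝ => F q.1 q.2) :
    Measurable fun q : (Fin n → ℝ) × ℝ =>
      (‖F q.1 q.2‖₊ : ℝ≥0∞) ^ 2 / ENNReal.ofReal (q.2 ^ (n + 1)) :=
  (hF.nnnorm.coe_nnreal_ennreal.pow_const 2).div
    (ENNReal.measurable_ofReal.comp (measurable_snd.pow_const _))

lemma measurable_conicalSq {F : (Fin n → ℝ) → ℝ → ℂ}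
    (hF : Measurable fun q : (Fin n → ℝ) × ℝ => F q.1 q.2) : Measurable (conicalSq n F) :=
  (measurable_setLIntegral_cone volume (measurable_conicalSq_integrand hF)).pow_const _

lemma div_ofReal_pow_succ_mul_ofReal_two_mul_pow (c : ℝ≥0∞) {t : ℝ} (ht : 0 < t) :
    c / ENNReal.ofReal (t ^ (n + 1)) * ENNReal.ofReal ((2 * t) ^ n) =
      2 ^ n * (c / ENNReal.ofReal t) := by
  have hd : ENNReal.ofReal t ^ n ≠ 0 := pow_ne_zero _ (ENNReal.ofReal_pos.2 ht).ne'
  rw [ENNReal.ofReal_pow ht.le, ENNReal.ofReal_pow (by positivity), ENNReal.ofReal_mul zero_le_two,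
    ENNReal.ofReal_ofNat, mul_pow, pow_succ', mul_comm, mul_assoc, mul_div_assoc', mul_comm _ c,
    ENNReal.mul_div_mul_right _ _ hd (pow_ne_top ofReal_ne_top)]

lemma lintegral_conicalSq_sq {F : (Fin n → ℝ) → ℝ → ℂ}
    (hF : Measurable fun q : (Fin n → ℝ) × ℝ => F q.1 q.2) :
    ∫⁻ x, conicalSq n F x ^ 2 =
      2 ^ n * ∫⁻ q in {q : (Fin n → ℝ) × ℝ | 0 < q.2},
        (‖F q.1 q.2‖₊ : ℝ≥0∞) ^ 2 / ENNReal.ofReal q.2 := by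
  set f : (Fin n → ℝ) × ℝ → ℝ≥0∞ :=
    fun q => (‖F q.1 q.2‖₊ : ℝ≥0∞) ^ 2 / ENNReal.ofReal (q.2 ^ (n + 1))
  have hsupp :
      (fun q => f q * volume (ball q.1 q.2)).support ⊆ {q : (Fin n → ℝ) × ℝ | 0 < q.2} := by
    intro q hq
    by_contra hq2
    simp [ball_eq_empty.2 (not_lt.1 hq2)] at hq
  calc ∫⁻ x, conicalSq n F x ^ 2
      = ∫⁻ q, f q * volume (ball q.1 q.2) := by
        simp only [conicalSq_sq]
        exact lintegral_setLIntegral_cone volume volume (measurable_conicalSq_integrand hF)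
    _ = ∫⁻ q in {q : (Fin n → ℝ) × ℝ | 0 < q.2}, f q * volume (ball q.1 q.2) :=
        (setLIntegral_eq_of_support_subset hsupp).symm
    _ = ∫⁻ q in {q : (Fin n → ℝ) × ℝ | 0 < q.2},
          2 ^ n * ((‖F q.1 q.2‖₊ : ℝ≥0∞) ^ 2 / ENNReal.ofReal q.2) :=
        setLIntegral_congr_fun (measurableSet_lt measurable_const measurable_snd) fun q hq => by
          rw [Real.volume_pi_ball _ hq, Fintype.card_fin]
          exact div_ofReal_pow_succ_mul_ofReal_two_mul_pow _ hq
    _ = _ := lintegral_const_mul' _ _ (pow_ne_top ofNat_ne_top)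

lemma conicalSq_eq_zero_of_support_subset_tent {F : (Fin n → ℝ) → ℝ → ℂ} {xQ : Fin n → ℝ}
    {l : ℝ} (hF : (fun q : (Fin n → ℝ) × ℝ => F q.1 q.2).support ⊆ tent n xQ l)
    {x : Fin n → ℝ} (hx : x ∉ closedBall xQ (l / 2)) : conicalSq n F x = 0 := by
  have hzero : EqOn (fun q : (Fin n → ℝ) × ℝ =>
      (‖F q.1 q.2‖₊ : ℝ≥0∞) ^ 2 / ENNReal.ofReal (q.2 ^ (n + 1))) 0 (cone x) := by
    intro q hq
    by_cases hFq : F q.1 q.2 = 0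
    · simp [hFq]
    · have htent := (hF hFq).2
      have := dist_triangle x q.1 xQ
      rw [mem_closedBall, not_le] at hx
      linarith [hq.2, dist_comm x q.1]
  rw [conicalSq_eq, setLIntegral_congr_fun (measurableSet_cone x) hzero]
  simp

lemma lintegral_conicalSq_sq_le_of_support_subset_tent {F : (Fin n → ℝ) → ℝ → ℂ}
    {xQ : Fin n → ℝ} {l : ℝ} (hF : Measurable fun q : (Fin n → ℝ) × ℝ => F q.1 q.2)
    (hsupp : (fun q : (Fin n → ℝ) × ℝ => F q.1 q.2).support ⊆ tent n xQ l) :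
    ∫⁻ x, conicalSq n F x ^ 2 ≤
      2 ^ n * ∫⁻ q in tent n xQ l, (‖F q.1 q.2‖₊ : ℝ≥0∞) ^ 2 / ENNReal.ofReal q.2 := by
  have hsupp' : (fun q : (Fin n → ℝ) × ℝ =>
      (‖F q.1 q.2‖₊ : ℝ≥0∞) ^ 2 / ENNReal.ofReal q.2).support ⊆ tent n xQ l := by
    intro q hq
    refine hsupp fun h0 => hq ?_
    simp [h0]
  rw [lintegral_conicalSq_sq hF, setLIntegral_eq_of_support_subset hsupp']
  gcongr 2 ^ n * ?_
  exact setLIntegral_le_lintegral _ _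

end SquareFunction

lemma setLIntegral_le_of_lintegral_sq_le {X : Type*} [MeasurableSpace X] {μ : Measure X}
    {g : X → ℝ≥0∞} (hg : AEMeasurable g μ) (s : Set X) {a b : ℝ} (ha : 0 ≤ a) (hb : 0 ≤ b)
    (hg2 : ∫⁻ x, g x ^ 2 ∂μ ≤ ENNReal.ofReal (a ^ 2)) (hs : μ s ≤ ENNReal.ofReal (b ^ 2)) :
    ∫⁻ x in s, g x ∂μ ≤ ENNReal.ofReal (a * b) := by
  have hCS := ENNReal.lintegral_mul_le_Lp_mul_Lq (μ.restrict s) Real.HolderConjugate.two_two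
    hg.restrict (aemeasurable_const (b := 1))
  simp only [Pi.mul_apply, mul_one, lintegral_const, Measure.restrict_apply_univ, one_pow,
    one_mul, ENNReal.rpow_two] at hCS
  have hsqrt : ∀ c : ℝ, 0 ≤ c → ENNReal.ofReal (c ^ 2) ^ (1 / 2 : ℝ) = ENNReal.ofReal c := by
    intro c hc
    rw [ENNReal.ofReal_rpow_of_nonneg (sq_nonneg c) (by norm_num), ← Real.sqrt_eq_rpow,
      Real.sqrt_sq hc]
  calc ∫⁻ x in s, g x ∂μ
      ≤ (∫⁻ x in s, g x ^ 2 ∂μ) ^ (1 / 2 : ℝ) * μ s ^ (1 / 2 : ℝ) := hCS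
    _ ≤ ENNReal.ofReal (a ^ 2) ^ (1 / 2 : ℝ) * ENNReal.ofReal (b ^ 2) ^ (1 / 2 : ℝ) := by
        gcongr
        exact (setLIntegral_le_lintegral s _).trans hg2
    _ = ENNReal.ofReal (a * b) := by rw [hsqrt a ha, hsqrt b hb, ENNReal.ofReal_mul ha]

section UpperType

variable {Φ : ℝ → ℝ} {C₁ u : ℝ}

lemma le_affine_of_upperType (hmono : MonotoneOn Φ (Ioi 0)) (hΦ0 : Φ 0 = 0) (hC₁ : 1 ≤ C₁)
    (hu : 0 < u) (hΦu : 0 < Φ u) (hup : ∀ t, 1 ≤ t → Φ (u * t) ≤ C₁ * t * Φ u) {r : ℝ}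
    (hr : 0 ≤ r) : Φ r ≤ C₁ * Φ u + C₁ * Φ u / u * r := by
  have hbase : Φ u ≤ C₁ * Φ u := le_mul_of_one_le_left hΦu.le hC₁
  have hslope : 0 ≤ C₁ * Φ u / u * r := by positivity
  rcases hr.eq_or_lt with rfl | hr
  · linarith
  rcases le_or_gt r u with hru | hur
  · linarith [hmono hr hu hru]
  · have := hup (r / u) ((one_le_div hu).2 hur.le)
    rw [mul_div_cancel₀ r hu.ne'] at this
    linarith [show C₁ * (r / u) * Φ u = C₁ * Φ u / u * r by ring]

lemma extPhi_le_affine (hmono : MonotoneOn Φ (Ioi 0)) (hΦ0 : Φ 0 = 0) (hC₁ : 1 ≤ C₁)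
    (hu : 0 < u) (hΦu : 0 < Φ u) (hup : ∀ t, 1 ≤ t → Φ (u * t) ≤ C₁ * t * Φ u) (s : ℝ≥0∞) :
    extPhi Φ s ≤ ENNReal.ofReal (C₁ * Φ u) + ENNReal.ofReal (C₁ * Φ u / u) * s := by
  have hslope : 0 < C₁ * Φ u / u := by positivity
  rcases eq_or_ne s ⊤ with rfl | hs
  · simp [mul_top (ENNReal.ofReal_pos.2 hslope).ne']
  rw [extPhi, if_neg hs, ← ENNReal.ofReal_toReal hs, ← ENNReal.ofReal_mul hslope.le,
    ← ENNReal.ofReal_add (by positivity) (by positivity), ENNReal.toReal_ofReal toReal_nonneg]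
  exact ENNReal.ofReal_le_ofReal
    (le_affine_of_upperType hmono hΦ0 hC₁ hu hΦu hup toReal_nonneg)

lemma lintegral_extPhi_le_of_sq_le {X : Type*} [MeasurableSpace X] {μ : Measure X}
    {V K : ℝ} (hmono : MonotoneOn Φ (Ioi 0)) (hΦ0 : Φ 0 = 0) (hC₁ : 1 ≤ C₁)
    (hu : 0 < u) (hup : ∀ t, 1 ≤ t → Φ (u * t) ≤ C₁ * t * Φ u) (hV : 0 < V) (hΦu : Φ u = V⁻¹)
    (hK : 0 ≤ K) {g : X → ℝ≥0∞} (hg : AEMeasurable g μ) {s : Set X}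
    (hsV : μ s ≤ ENNReal.ofReal V) (hgs : ∀ x ∉ s, g x = 0)
    (hg2 : ∫⁻ x, g x ^ 2 ∂μ ≤ ENNReal.ofReal (K ^ 2 * V * u ^ 2)) :
    ∫⁻ x, extPhi Φ (g x) ∂μ ≤ ENNReal.ofReal (C₁ * (1 + K)) := by
  have hΦu_pos : 0 < Φ u := hΦu ▸ inv_pos.2 hV
  have hsupp : (fun x => extPhi Φ (g x)).support ⊆ s := by
    intro x hx
    by_contra hxs
    simp [hgs x hxs, extPhi, hΦ0] at hx
  have hL1 : ∫⁻ x in s, g x ∂μ ≤ ENNReal.ofReal (K * V * u) := by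
    rw [← Real.mul_self_sqrt hV.le, ← mul_assoc, mul_right_comm]
    refine setLIntegral_le_of_lintegral_sq_le hg s (by positivity) (Real.sqrt_nonneg V) ?_ ?_
    · rwa [mul_pow, mul_pow, Real.sq_sqrt hV.le]
    · rwa [Real.sq_sqrt hV.le]
  calc ∫⁻ x, extPhi Φ (g x) ∂μ
      = ∫⁻ x in s, extPhi Φ (g x) ∂μ := (setLIntegral_eq_of_support_subset hsupp).symm
    _ ≤ ∫⁻ x in s, ENNReal.ofReal (C₁ * Φ u) + ENNReal.ofReal (C₁ * Φ u / u) * g x ∂μ :=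
        lintegral_mono fun x => extPhi_le_affine hmono hΦ0 hC₁ hu hΦu_pos hup (g x)
    _ = ENNReal.ofReal (C₁ * Φ u) * μ s + ENNReal.ofReal (C₁ * Φ u / u) * ∫⁻ x in s, g x ∂μ := by
        rw [lintegral_add_left measurable_const, setLIntegral_const,
          lintegral_const_mul' _ _ ofReal_ne_top]
    _ ≤ ENNReal.ofReal (C₁ * Φ u) * ENNReal.ofReal V +
          ENNReal.ofReal (C₁ * Φ u / u) * ENNReal.ofReal (K * V * u) := by
        gcongr
    _ = ENNReal.ofReal (C₁ * (1 + K)) := by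
        have hC₁0 : 0 ≤ C₁ := by linarith
        rw [← ENNReal.ofReal_mul (by positivity), ← ENNReal.ofReal_mul (by positivity),
          ← ENNReal.ofReal_add (by positivity) (by positivity), hΦu]
        congr 1
        field_simp

end UpperType

theorem stmt11_general (n : ℕ) (p C₁ : ℝ) (hC₁ : 1 ≤ C₁) :
    ∃ C : ℝ, 0 < C ∧
    ∀ Φ Ψ : ℝ → ℝ, ContinuousOn Φ (Set.Ioi 0) → StrictMonoOn Φ (Set.Ioi 0) →
      (∀ t ∈ Set.Ioi (0:ℝ), 0 < Φ t) → Φ 0 = 0 →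
      (∀ t ∈ Set.Ioi (0:ℝ), 0 < Ψ t) →
      (∀ t ∈ Set.Ioi (0:ℝ), Ψ (Φ t) = t) → (∀ t ∈ Set.Ioi (0:ℝ), Φ (Ψ t) = t) →
      (∀ s ∈ Set.Ioi (0:ℝ), ∀ t : ℝ, 1 ≤ t → Φ (s * t) ≤ C₁ * t * Φ s) →
      (∀ s ∈ Set.Ioi (0:ℝ), ∀ t ∈ Set.Ioo (0:ℝ) 1, Φ (s * t) ≤ t ^ p * Φ s) →
    ∀ (xQ : Fin n → ℝ) (l : ℝ), 0 < l →
    ∀ a : (Fin n → ℝ) → ℝ → ℂ,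
      Measurable (fun q : (Fin n → ℝ) × ℝ => a q.1 q.2) →
      (Function.support (fun q : (Fin n → ℝ) × ℝ => a q.1 q.2) ⊆ tent n xQ l) →
      (∫⁻ q in tent n xQ l, (‖a q.1 q.2‖₊ : ℝ≥0∞) ^ 2 / ENNReal.ofReal q.2) ≤
        ENNReal.ofReal ((l ^ n)⁻¹ / rhoOf Ψ (l ^ n) ^ 2) →
      (∫⁻ x, extPhi Φ (conicalSq n a x)) ≤ ENNReal.ofReal C := by
  refine ⟨C₁ * (1 + √(2 ^ n)), by positivity, ?_⟩
  intro Φ Ψ _ hmono _ hΦ0 hΨpos _ hΦΨ hup _ xQ l hl a ha hsupp hsize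
  have hV : 0 < l ^ n := pow_pos hl n
  set u := Ψ (l ^ n)⁻¹ with hu_def
  have hu : 0 < u := hΨpos _ (inv_pos.2 hV)
  have hL2 : ∫⁻ x, conicalSq n a x ^ 2 ≤ ENNReal.ofReal (√(2 ^ n) ^ 2 * l ^ n * u ^ 2) := by
    refine (lintegral_conicalSq_sq_le_of_support_subset_tent ha hsupp).trans ?_
    rw [Real.sq_sqrt (by positivity), mul_assoc, ENNReal.ofReal_mul (by positivity),
      ENNReal.ofReal_pow zero_le_two, ENNReal.ofReal_ofNat]
    gcongr
    refine hsize.trans_eq (congrArg ENNReal.ofReal ?_)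
    rw [rhoOf, ← hu_def]
    field_simp
  refine lintegral_extPhi_le_of_sq_le hmono.monotoneOn hΦ0 hC₁ hu (hup u hu) hV
    (hΦΨ _ (inv_pos.2 hV)) (Real.sqrt_nonneg _) (measurable_conicalSq ha).aemeasurable
    ?_ (fun x hx => conicalSq_eq_zero_of_support_subset_tent hsupp hx) hL2
  rw [Real.volume_pi_closedBall _ (by positivity), Fintype.card_fin, mul_div_cancel₀ l two_ne_zero]

/-- uniform bound `∫_{ℝⁿ} Φ(A(a)) dx ≤ C` over all `T_Φ(ℝⁿ)`-atoms `a`, where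
`a` is supported in the tent of a cube `Q` of sidelength `l` (so `|Q| = lⁿ`), with
`∫∫_{Q̂} |a|² dy dt/t ≤ |Q|⁻¹ ρ(|Q|)⁻²`; `Ψ` is the inverse of `Φ`. The constant `C` depends
only on `n`, `p` and `C₁`. -/
theorem stmt11 (n : ℕ) (hn : 1 ≤ n) (p C₁ : ℝ) (hp : p ∈ Set.Ioc (0:ℝ) 1) (hC₁ : 1 ≤ C₁) :
    ∃ C : ℝ, 0 < C ∧
    ∀ Φ Ψ : ℝ → ℝ, ContinuousOn Φ (Set.Ioi 0) → StrictMonoOn Φ (Set.Ioi 0) →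
      (∀ t ∈ Set.Ioi (0:ℝ), 0 < Φ t) → Φ 0 = 0 →
      (∀ t ∈ Set.Ioi (0:ℝ), 0 < Ψ t) →
      (∀ t ∈ Set.Ioi (0:ℝ), Ψ (Φ t) = t) → (∀ t ∈ Set.Ioi (0:ℝ), Φ (Ψ t) = t) →
      (∀ s ∈ Set.Ioi (0:ℝ), ∀ t : ℝ, 1 ≤ t → Φ (s * t) ≤ C₁ * t * Φ s) →
      (∀ s ∈ Set.Ioi (0:ℝ), ∀ t ∈ Set.Ioo (0:ℝ) 1, Φ (s * t) ≤ t ^ p * Φ s) →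
    ∀ (xQ : Fin n → ℝ) (l : ℝ), 0 < l →
    ∀ a : (Fin n → ℝ) → ℝ → ℂ,
      Measurable (fun q : (Fin n → ℝ) × ℝ => a q.1 q.2) →
      (Function.support (fun q : (Fin n → ℝ) × ℝ => a q.1 q.2) ⊆ tent n xQ l) →
      (∫⁻ q in tent n xQ l, (‖a q.1 q.2‖₊ : ℝ≥0∞) ^ 2 / ENNReal.ofReal q.2) ≤
        ENNReal.ofReal ((l ^ n)⁻¹ / rhoOf Ψ (l ^ n) ^ 2) →
      (∫⁻ x, extPhi Φ (conicalSq n a x)) ≤ ENNReal.ofReal C :=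
  stmt11_general n p C₁ hC₁
end
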